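/- For every n ∈ ℕ, the number of points of 𝐒 with coordinate sum at most 2^n − 1 equals 3^n; i.e., |{(k,l) ∈ ℕ² : k + l ≤ 2^n − 1 and C(k+l,k) odd}| = 3^n. -/

import Mathlib

/-!
By Lucas' theorem mod 2, `C(k + l, k)` is odd iff adding `k` and `l` in binary produces no carry:
the lowest bits of `(k, l)` are `(0, 0)`, `(1, 0)` or `(0, 1)`, and `C(k/2 + l/2, k/2)` is again odd.
Splitting off the lowest bits therefore identifies the points with `k + l < 2 ^ (n + 1)` with
pairs (point with `k + l < 2 ^ n`, carry-free bit pair), so the count triples with each step.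
-/

theorem Nat.odd_choose_iff_odd_choose_mod_two_and_div_two (n k : ℕ) :
    Odd (n.choose k) ↔ Odd ((n % 2).choose (k % 2)) ∧ Odd ((n / 2).choose (k / 2)) := by
  have h := Choose.choose_modEq_choose_mod_mul_choose_div_nat (p := 2) (n := n) (k := k)
  rw [Nat.odd_iff, h, ← Nat.odd_iff, Nat.odd_mul]

theorem Nat.odd_choose_add_iff (k l : ℕ) :
    Odd ((k + l).choose k) ↔ (k % 2 = 0 ∨ l % 2 = 0) ∧ Odd ((k / 2 + l / 2).choose (k / 2)) := by
  have hmod : (k + l) % 2 = (k % 2 + l % 2) % 2 := by omega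
  have hdiv : k % 2 = 0 ∨ l % 2 = 0 → (k + l) / 2 = k / 2 + l / 2 := by omega
  rw [Nat.odd_choose_iff_odd_choose_mod_two_and_div_two, hmod]
  rcases Nat.mod_two_eq_zero_or_one k with hk | hk <;>
    rcases Nat.mod_two_eq_zero_or_one l with hl | hl <;>
    simp [hk, hl, hdiv]

def oddChoosePairs (n : ℕ) : Set (ℕ × ℕ) :=
  {p | p.1 + p.2 < 2 ^ n ∧ Odd ((p.1 + p.2).choose p.1)}

def carryFreeBits : Set (ℕ × ℕ) := {(0, 0), (1, 0), (0, 1)}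

def splitLowBits (p : ℕ × ℕ) : (ℕ × ℕ) × (ℕ × ℕ) := ((p.1 / 2, p.2 / 2), (p.1 % 2, p.2 % 2))

theorem splitLowBits_injective : Function.Injective splitLowBits := by
  rintro ⟨a, b⟩ ⟨c, d⟩ h
  simp only [splitLowBits, Prod.mk.injEq] at h
  ext <;> omega

theorem oddChoosePairs_succ (n : ℕ) :
    oddChoosePairs (n + 1) = splitLowBits ⁻¹' (oddChoosePairs n ×ˢ carryFreeBits) := by
  ext ⟨k, l⟩
  simp only [oddChoosePairs, carryFreeBits, splitLowBits, Set.mem_ofPred_eq, Set.mem_preimage,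
    Set.mem_prod, Set.mem_insert_iff, Set.mem_singleton_iff, Prod.mk.injEq]
  rw [Nat.odd_choose_add_iff, pow_succ]
  by_cases hodd : Odd ((k / 2 + l / 2).choose (k / 2))
  · simp only [hodd, and_true]
    omega
  · simp [hodd]

theorem ncard_oddChoosePairs (n : ℕ) : (oddChoosePairs n).ncard = 3 ^ n := by
  induction n with
  | zero =>
    have : oddChoosePairs 0 = {(0, 0)} := by
      ext ⟨k, l⟩
      simp +contextual [oddChoosePairs]
    rw [this, Set.ncard_singleton, pow_zero]
  | succ n ih =>
    have hrange : oddChoosePairs n ×ˢ carryFreeBits ⊆ Set.range splitLowBits := by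
      rintro ⟨⟨a, b⟩, ⟨i, j⟩⟩ ⟨-, hij⟩
      refine ⟨(2 * a + i, 2 * b + j), ?_⟩
      simp only [carryFreeBits, Set.mem_insert_iff, Set.mem_singleton_iff, Prod.mk.injEq] at hij
      simp only [splitLowBits, Prod.mk.injEq]
      omega
    rw [oddChoosePairs_succ, Set.ncard_preimage_of_injective_subset_range splitLowBits_injective
      hrange, Set.ncard_prod, ih, pow_succ]
    simp [carryFreeBits]

theorem stmt12 (n : ℕ) :
    ({p : ℕ × ℕ | p.1 + p.2 ≤ 2 ^ n - 1 ∧ Odd (Nat.choose (p.1 + p.2) p.1)}).ncard =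
      3 ^ n := by
  simp only [Nat.le_sub_one_iff_lt (Nat.two_pow_pos n)]
  exact ncard_oddChoosePairs n
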